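/- arXiv:2306.12301 — 6 statements merged into one kernel-verified Lean document; each statement's English description precedes it below -/
import Mathlib

section
/- Let Ψ : ℝ → ℝ be C¹ with Ψ'(ψ) > 0 for all ψ, and suppose Ψ(Ψ(Ψ(Ψ(ψ)))) = ψ + 2π for all ψ ∈ ℝ. Let M > 0 satisfy Ψ'(ψ) ≤ M for all ψ, and let δ ≥ 0 satisfy |Ψ(ψ + π) - Ψ(ψ) - π| ≤ δ for all ψ. Then |Ψ(Ψ(ψ)) - ψ - π| ≤ (1 + M)·δ for all ψ ∈ ℝ. -/
open Real

/-! The square `g = Ψ ∘ Ψ` is monotone, satisfies `g ∘ g = · + 2π`, and commutes with the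
translation by `π` up to `(1 + M) δ`, since `Ψ` is `M`-Lipschitz. For a monotone `g`, comparing
`g x` with `x + π` and applying `g` once more turns the almost-commutation defect into a bound
on `g x - x - π`. -/

open scoped NNReal

lemma lipschitzWith_of_deriv_nonneg_of_deriv_le {f : ℝ → ℝ} {M : ℝ} (hf : Differentiable ℝ f)
    (h0 : ∀ x, 0 ≤ deriv f x) (hM : ∀ x, deriv f x ≤ M) : LipschitzWith M.toNNReal f := by
  refine lipschitzWith_of_nnnorm_deriv_le hf fun x => ?_
  rw [← NNReal.coe_le_coe, coe_nnnorm, Real.norm_of_nonneg (h0 x),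
    Real.coe_toNNReal _ ((h0 x).trans (hM x))]
  exact hM x

lemma abs_comp_comp_add_sub_le {f : ℝ → ℝ} {K : ℝ≥0} (hf : LipschitzWith K f) {c δ : ℝ}
    (h : ∀ x, |f (x + c) - f x - c| ≤ δ) (x : ℝ) :
    |f (f (x + c)) - f (f x) - c| ≤ (1 + K) * δ := by
  have hout : |f (f (x + c)) - f (f x + c)| ≤ K * δ := by
    calc |f (f (x + c)) - f (f x + c)| ≤ K * |f (x + c) - (f x + c)| := by
          simpa only [Real.dist_eq] using hf.dist_le_mul (f (x + c)) (f x + c)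
      _ ≤ K * δ := by
          rw [← sub_sub]
          exact mul_le_mul_of_nonneg_left (h x) K.coe_nonneg
  calc |f (f (x + c)) - f (f x) - c|
      = |(f (f (x + c)) - f (f x + c)) + (f (f x + c) - f (f x) - c)| := by ring_nf
    _ ≤ K * δ + δ := (abs_add_le _ _).trans (add_le_add hout (h (f x)))
    _ = (1 + K) * δ := by ring

lemma abs_sub_sub_le_of_monotone_of_comp_self {g : ℝ → ℝ} (hg : Monotone g) {c ε : ℝ}
    (hgg : ∀ x, g (g x) = x + 2 * c) (h : ∀ x, |g (x + c) - g x - c| ≤ ε) (x : ℝ) :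
    |g x - x - c| ≤ ε := by
  obtain ⟨hlo, hhi⟩ := abs_le.mp (h x)
  have := hgg x
  rw [abs_le]
  constructor
  · rcases le_or_gt (x + c) (g x) with hx | hx
    · linarith
    · linarith [hg hx.le]
  · rcases le_or_gt (g x) (x + c) with hx | hx
    · linarith
    · linarith [hg hx.le]

theorem stmt2_general (Ψ : ℝ → ℝ) (hΨ : ContDiff ℝ 1 Ψ) (hpos : ∀ ψ, 0 < deriv Ψ ψ)
    (h4 : ∀ ψ, Ψ (Ψ (Ψ (Ψ ψ))) = ψ + 2 * π)
    (M : ℝ) (hMb : ∀ ψ, deriv Ψ ψ ≤ M)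
    (δ : ℝ) (hcomm : ∀ ψ, |Ψ (ψ + π) - Ψ ψ - π| ≤ δ) :
    ∀ ψ, |Ψ (Ψ ψ) - ψ - π| ≤ (1 + M) * δ := by
  have hM : 0 ≤ M := (hpos 0).le.trans (hMb 0)
  have hmono : Monotone Ψ := (strictMono_of_deriv_pos hpos).monotone
  have hlip : LipschitzWith M.toNNReal Ψ :=
    lipschitzWith_of_deriv_nonneg_of_deriv_le (hΨ.differentiable one_ne_zero)
      (fun ψ => (hpos ψ).le) hMb
  refine abs_sub_sub_le_of_monotone_of_comp_self (g := fun ψ => Ψ (Ψ ψ)) (hmono.comp hmono) h4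
    fun ψ => ?_
  simpa only [Real.coe_toNNReal _ hM] using abs_comp_comp_add_sub_le hlip hcomm ψ

/-- If `Ψ : ℝ → ℝ` is `C¹` with `0 < Ψ' ≤ M`, its fourth iterate is the translation by `2π`,
and `|Ψ(ψ + π) - Ψ(ψ) - π| ≤ δ` for all `ψ`, then `|Ψ(Ψ(ψ)) - ψ - π| ≤ (1 + M)·δ`
for all `ψ`. -/
theorem stmt2 (Ψ : ℝ → ℝ) (hΨ : ContDiff ℝ 1 Ψ) (hpos : ∀ ψ, 0 < deriv Ψ ψ)
    (h4 : ∀ ψ, Ψ (Ψ (Ψ (Ψ ψ))) = ψ + 2 * π)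
    (M : ℝ) (hM : 0 < M) (hMb : ∀ ψ, deriv Ψ ψ ≤ M)
    (δ : ℝ) (hδ : 0 ≤ δ) (hcomm : ∀ ψ, |Ψ (ψ + π) - Ψ ψ - π| ≤ δ) :
    ∀ ψ, |Ψ (Ψ ψ) - ψ - π| ≤ (1 + M) * δ :=
  stmt2_general Ψ hΨ hpos h4 M hMb δ hcomm
end

section
/- For every integer l ≥ 6 and every C > 0 there exists K > 0 such that for every δ ∈ (0, 1] and every sequence a : ℤ → ℂ satisfying |a_k| ≤ C·⟨k⟩^{-l} and |a_k| ≤ δ·⟨k⟩^{-1} for all k (where ⟨k⟩ := max(1, |k|)), one has Σ_{k ∈ ℤ} ⟨k⟩⁷ |a_k|² ≤ K·δ^{1/2}. -/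
/-!
Pointwise interpolation suffices: with `t = ⟨k⟩`, the two bounds give
`|a_k|⁴ ≤ (C t^{-l})³ (δ t^{-1})`, so `t¹⁸ |a_k|⁴ ≤ C³ δ` as soon as `3l + 1 ≥ 18`, i.e. `l ≥ 6`.
Hence `t⁷ |a_k|² ≤ √(C³δ) t^{-2}`, and `Σ_k ⟨k⟩^{-2}` is finite.
-/

open Real

lemma summable_one_div_max_one_abs_int_pow {p : ℕ} (hp : 1 < p) :
    Summable (fun k : ℤ => 1 / (max 1 |(k : ℝ)|) ^ p) := by
  refine (summable_one_div_int_pow.mpr hp).norm.of_norm_bounded_eventually ?_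
  filter_upwards [(Set.finite_singleton (0 : ℤ)).compl_mem_cofinite] with k hk
  have hk_abs : (1 : ℝ) ≤ |(k : ℝ)| := by
    rw [← Int.cast_abs]
    exact_mod_cast Int.one_le_abs hk
  simp [max_eq_right hk_abs]

lemma pow_four_le_of_le_of_le {b x y : ℝ} (hb : 0 ≤ b) (hx : b ≤ x) (hy : b ≤ y) :
    b ^ 4 ≤ x ^ 3 * y :=
  calc b ^ 4 = b ^ 3 * b := by ring
    _ ≤ x ^ 3 * y := mul_le_mul (pow_le_pow_left₀ hb hx 3) hy hb (pow_nonneg (hb.trans hx) 3)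

lemma pow_seven_mul_sq_le_of_interpolation {l : ℕ} (hl : 6 ≤ l) {C δ t b : ℝ} (ht : 1 ≤ t)
    (hb : 0 ≤ b) (hbC : b ≤ C / t ^ l) (hδb : b ≤ δ / t) :
    t ^ 7 * b ^ 2 ≤ √(C ^ 3 * δ) * (1 / t ^ 2) := by
  have ht0 : 0 < t := one_pos.trans_le ht
  have hsq : (t ^ 9 * b ^ 2) ^ 2 ≤ C ^ 3 * δ :=
    calc (t ^ 9 * b ^ 2) ^ 2 = t ^ 18 * b ^ 4 := by ring
      _ ≤ t ^ (3 * l + 1) * ((C / t ^ l) ^ 3 * (δ / t)) :=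
          mul_le_mul (pow_le_pow_right₀ ht (by omega)) (pow_four_le_of_le_of_le hb hbC hδb)
            (by positivity) (by positivity)
      _ = C ^ 3 * δ := by field_simp; ring
  have h9 : t ^ 9 * b ^ 2 ≤ √(C ^ 3 * δ) := Real.le_sqrt_of_sq_le hsq
  rw [mul_one_div, le_div_iff₀ (by positivity)]
  linarith [show t ^ 7 * b ^ 2 * t ^ 2 = t ^ 9 * b ^ 2 by ring]

/-- Fourier-side interpolation estimate: for every integer `l ≥ 6` and `C > 0` there is
`K > 0` such that for every `δ ∈ (0, 1]` and every `a : ℤ → ℂ` with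
`|a_k| ≤ C·⟨k⟩^{-l}` and `|a_k| ≤ δ·⟨k⟩^{-1}` (where `⟨k⟩ = max(1, |k|)`), the weighted
sum `Σ_k ⟨k⟩⁷|a_k|²` converges and is at most `K·δ^{1/2}`. -/
theorem stmt5 (l : ℕ) (hl : 6 ≤ l) (C : ℝ) (hC : 0 < C) :
    ∃ K : ℝ, 0 < K ∧
      ∀ δ : ℝ, 0 < δ → δ ≤ 1 →
        ∀ a : ℤ → ℂ,
          (∀ k : ℤ, ‖a k‖ ≤ C / (max 1 |(k : ℝ)|) ^ l) →
          (∀ k : ℤ, ‖a k‖ ≤ δ / max 1 |(k : ℝ)|) →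
          Summable (fun k : ℤ => (max 1 |(k : ℝ)|) ^ 7 * ‖a k‖ ^ 2) ∧
            ∑' k : ℤ, (max 1 |(k : ℝ)|) ^ 7 * ‖a k‖ ^ 2
              ≤ K * δ ^ ((1 : ℝ) / 2) := by
  set g : ℤ → ℝ := fun k => 1 / (max 1 |(k : ℝ)|) ^ 2
  have hg : Summable g := summable_one_div_max_one_abs_int_pow one_lt_two
  have hg_pos : 0 < ∑' k, g k :=
    hg.tsum_pos (fun k => by positivity) 0 (by simp [g])
  refine ⟨√(C ^ 3) * ∑' k, g k, by positivity, fun δ hδ _ a haC haδ => ?_⟩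
  have hbound : ∀ k : ℤ, (max 1 |(k : ℝ)|) ^ 7 * ‖a k‖ ^ 2 ≤ √(C ^ 3 * δ) * g k := fun k =>
    pow_seven_mul_sq_le_of_interpolation hl (le_max_left _ _) (norm_nonneg _)
      (haC k) (haδ k)
  have hsum := Summable.of_nonneg_of_le (fun k => by positivity) hbound (hg.mul_left _)
  refine ⟨hsum, ?_⟩
  calc ∑' k : ℤ, (max 1 |(k : ℝ)|) ^ 7 * ‖a k‖ ^ 2
      ≤ √(C ^ 3 * δ) * ∑' k, g k := by
        rw [← tsum_mul_left]
        exact hsum.tsum_le_tsum hbound (hg.mul_left _)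
    _ = √(C ^ 3) * (∑' k, g k) * δ ^ ((1 : ℝ) / 2) := by
        rw [Real.sqrt_mul (by positivity), ← Real.sqrt_eq_rpow]
        ring
end

section
/- Let H, ρ, F be as in the twist map setting, and assume additionally that |∂₁₂H(x, x')| ≤ M' for all x, x' for some M' > 0. Let g : ℝ → ℝ be continuous with g(x + 1) = g(x) for all x, and suppose the graph Γ = {(x, g(x)) : x ∈ ℝ} is invariant: F maps Γ bijectively onto Γ. Then the regions above and below the graph are invariant: if r > g(x) and F(x, r) = (x', r'), then r' > g(x'); and if r < g(x) and F(x, r) = (x', r'), then r' < g(x'). -/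
/-!
On the invariant graph `F` acts by `x ↦ φ x`, where `g x = -∂₁H(x, φ x)`. By the twist condition
`∂₁H(x, ·)` is strictly decreasing, so `φ` is continuous; it is injective because `F` is injective
on the graph, and `φ (x + 1) = φ x + 1` by periodicity, so `φ` is increasing.
If `F(x, r) = (x', r')` and `x' = φ x₀`, then `r = -∂₁H(x, x')` and `g x = -∂₁H(x, φ x)` compare
as `φ x` and `x'`, i.e. as `x` and `x₀`, and by the twist condition again so do
`g x' = ∂₂H(x₀, x')` and `r' = ∂₂H(x, x')`.
-/

open Real

/-- Partial derivative of `H` in the first variable. -/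
noncomputable def D1 (H : ℝ → ℝ → ℝ) (x x' : ℝ) : ℝ := deriv (fun t => H t x') x

/-- Partial derivative of `H` in the second variable. -/
noncomputable def D2 (H : ℝ → ℝ → ℝ) (x x' : ℝ) : ℝ := deriv (fun t => H x t) x'

/-- Mixed second partial derivative `∂₁₂H` (first in the first variable, then in the
second variable). -/
noncomputable def D12 (H : ℝ → ℝ → ℝ) (x x' : ℝ) : ℝ := deriv (fun t => D1 H x t) x'

open Function Set

section Slices

variable {E : Type*} [NormedAddCommGroup E] [NormedSpace ℝ E] {f : ℝ × ℝ → E} {x y : ℝ}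

lemma DifferentiableAt.hasDerivAt_fst_slice (hf : DifferentiableAt ℝ f (x, y)) :
    HasDerivAt (fun t => f (t, y)) (fderiv ℝ f (x, y) (1, 0)) x :=
  hf.hasFDerivAt.comp_hasDerivAt x ((hasDerivAt_id x).prodMk (hasDerivAt_const x y))

lemma DifferentiableAt.hasDerivAt_snd_slice (hf : DifferentiableAt ℝ f (x, y)) :
    HasDerivAt (fun t => f (x, t)) (fderiv ℝ f (x, y) (0, 1)) y :=
  hf.hasFDerivAt.comp_hasDerivAt y ((hasDerivAt_const y x).prodMk (hasDerivAt_id y))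

end Slices

section PartialDerivatives

variable {H : ℝ → ℝ → ℝ}

lemma D1_eq_fderiv (hH : Differentiable ℝ (uncurry H)) (x y : ℝ) :
    D1 H x y = fderiv ℝ (uncurry H) (x, y) (1, 0) :=
  (hH (x, y)).hasDerivAt_fst_slice.deriv

lemma D2_eq_fderiv (hH : Differentiable ℝ (uncurry H)) (x y : ℝ) :
    D2 H x y = fderiv ℝ (uncurry H) (x, y) (0, 1) :=
  (hH (x, y)).hasDerivAt_snd_slice.deriv

lemma continuous_uncurry_D1 (hH : ContDiff ℝ 1 (uncurry H)) : Continuous (uncurry (D1 H)) := by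
  have hD1 : uncurry (D1 H) = fun p => fderiv ℝ (uncurry H) p (1, 0) :=
    funext fun p => D1_eq_fderiv (hH.differentiable one_ne_zero) p.1 p.2
  rw [hD1]
  exact (hH.continuous_fderiv one_ne_zero).clm_apply continuous_const

-- Symmetry of second derivatives.
lemma hasDerivAt_D2_fst (hH : ContDiff ℝ 2 (uncurry H)) (x y : ℝ) :
    HasDerivAt (fun s => D2 H s y) (D12 H x y) x := by
  have hdiff := hH.differentiable two_ne_zero
  have hf'' : DifferentiableAt ℝ (fderiv ℝ (uncurry H)) (x, y) :=
    ((hH.fderiv_right (m := 1) (by norm_num)).differentiable one_ne_zero) (x, y)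
  have hD1 : HasDerivAt (D1 H x) (fderiv ℝ (fderiv ℝ (uncurry H)) (x, y) (0, 1) (1, 0)) y := by
    simpa [← D1_eq_fderiv hdiff] using
      hf''.hasDerivAt_snd_slice.clm_apply (hasDerivAt_const y ((1 : ℝ), (0 : ℝ)))
  have hD2 : HasDerivAt (fun s => D2 H s y)
      (fderiv ℝ (fderiv ℝ (uncurry H)) (x, y) (1, 0) (0, 1)) x := by
    simpa [← D2_eq_fderiv hdiff] using
      hf''.hasDerivAt_fst_slice.clm_apply (hasDerivAt_const x ((0 : ℝ), (1 : ℝ)))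
  rw [show D12 H x y = _ from hD1.deriv,
    (hH.contDiffAt.isSymmSndFDerivAt (by simp)) (0, 1) (1, 0)]
  exact hD2

lemma D1_add_one (hper : ∀ x x', H (x + 1) (x' + 1) = H x x') (x y : ℝ) :
    D1 H (x + 1) (y + 1) = D1 H x y := by
  rw [D1, ← deriv_comp_add_const]
  simp only [hper]
  rfl

lemma strictAnti_D1 (htwist : ∀ x y, D12 H x y < 0) (x : ℝ) : StrictAnti (D1 H x) :=
  strictAnti_of_deriv_neg (htwist x)

lemma strictAnti_D2_fst (hH : ContDiff ℝ 2 (uncurry H)) (htwist : ∀ x y, D12 H x y < 0)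
    (y : ℝ) : StrictAnti (fun s => D2 H s y) :=
  strictAnti_of_deriv_neg fun s => (hasDerivAt_D2_fst hH s y).deriv ▸ htwist s y

end PartialDerivatives

lemma continuous_of_strictAnti_of_apply_eq {X : Type*} [TopologicalSpace X] {u : X → ℝ → ℝ}
    {c φ : X → ℝ} (hu : Continuous (uncurry u)) (hanti : ∀ x, StrictAnti (u x))
    (hc : Continuous c) (hφ : ∀ x, u x (φ x) = c x) : Continuous φ := by
  refine continuous_iff_continuousAt.2 fun x₀ => tendsto_order.2 ⟨fun a ha => ?_, fun a ha => ?_⟩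
  all_goals
    have hua : Continuous fun x => u x a := hu.comp (continuous_id.prodMk continuous_const)
    have hc₀ := hφ x₀ ▸ hanti x₀ ha
  · filter_upwards [hc.continuousAt.eventually_lt hua.continuousAt hc₀] with x hx
    exact (hanti x).lt_iff_gt.1 (hφ x ▸ hx)
  · filter_upwards [hua.continuousAt.eventually_lt hc.continuousAt hc₀] with x hx
    exact (hanti x).lt_iff_gt.1 (hφ x ▸ hx)

lemma Continuous.strictMono_of_injective_of_lt {f : ℝ → ℝ} (hf : Continuous f)
    (hinj : Injective f) {a b : ℝ} (hab : a < b) (hfab : f a < f b) : StrictMono f :=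
  (hf.strictMono_of_inj hinj).resolve_right fun hanti => (hanti hab).not_gt hfab

def graphMap (F : ℝ × ℝ → ℝ × ℝ) (g : ℝ → ℝ) (x : ℝ) : ℝ := (F (x, g x)).1

section GraphMap

variable {H : ℝ → ℝ → ℝ} {F : ℝ × ℝ → ℝ × ℝ} {g : ℝ → ℝ}
  (hF : ∀ x r x' r', F (x, r) = (x', r') → r = -D1 H x x' ∧ r' = D2 H x x')
  (hmaps : MapsTo F {p : ℝ × ℝ | p.2 = g p.1} {p : ℝ × ℝ | p.2 = g p.1})

include hmaps in
lemma apply_graph (x : ℝ) : F (x, g x) = (graphMap F g x, g (graphMap F g x)) :=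
  Prod.ext rfl (hmaps (x := (x, g x)) rfl)

include hF hmaps in
lemma D1_graphMap (x : ℝ) : D1 H x (graphMap F g x) = -g x := by
  rw [(hF _ _ _ _ (apply_graph hmaps x)).1, neg_neg]

include hmaps in
lemma graphMap_injective (hinj : InjOn F {p : ℝ × ℝ | p.2 = g p.1}) :
    Injective (graphMap F g) := fun a b hab =>
  congrArg Prod.fst <| hinj (x₁ := (a, g a)) (x₂ := (b, g b)) rfl rfl <| by
    rw [apply_graph hmaps a, apply_graph hmaps b, hab]

include hF hmaps in
lemma continuous_graphMap (hH : ContDiff ℝ 1 (uncurry H)) (htwist : ∀ x y, D12 H x y < 0)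
    (hg : Continuous g) : Continuous (graphMap F g) :=
  continuous_of_strictAnti_of_apply_eq (continuous_uncurry_D1 hH) (strictAnti_D1 htwist) hg.neg
    (D1_graphMap hF hmaps)

include hF hmaps in
lemma graphMap_add_one (hper : ∀ x x', H (x + 1) (x' + 1) = H x x')
    (htwist : ∀ x y, D12 H x y < 0) (hgper : ∀ x, g (x + 1) = g x) (x : ℝ) :
    graphMap F g (x + 1) = graphMap F g x + 1 :=
  (strictAnti_D1 htwist (x + 1)).injective <| by
    rw [D1_graphMap hF hmaps, D1_add_one hper, D1_graphMap hF hmaps, hgper]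

include hF hmaps in
lemma strictMono_graphMap (hH : ContDiff ℝ 1 (uncurry H))
    (hper : ∀ x x', H (x + 1) (x' + 1) = H x x') (htwist : ∀ x y, D12 H x y < 0)
    (hg : Continuous g) (hgper : ∀ x, g (x + 1) = g x)
    (hinj : InjOn F {p : ℝ × ℝ | p.2 = g p.1}) : StrictMono (graphMap F g) :=
  (continuous_graphMap hF hmaps hH htwist hg).strictMono_of_injective_of_lt
    (graphMap_injective hmaps hinj) (lt_add_one 0) <| by
      rw [graphMap_add_one hF hmaps hper htwist hgper]
      exact lt_add_one _

end GraphMap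

theorem stmt6_general (H : ℝ → ℝ → ℝ) (ρ : ℝ) (F : ℝ × ℝ → ℝ × ℝ)
    (hH : ContDiff ℝ 2 (Function.uncurry H))
    (hper : ∀ x x', H (x + 1) (x' + 1) = H x x')
    (hρ : 0 < ρ) (htwist : ∀ x x', D12 H x x' ≤ -ρ)
    (hFdef : ∀ x r x' r', F (x, r) = (x', r') ↔ (r = -D1 H x x' ∧ r' = D2 H x x'))
    (g : ℝ → ℝ) (hg : Continuous g) (hgper : ∀ x, g (x + 1) = g x)
    (hinv : Set.BijOn F {p : ℝ × ℝ | p.2 = g p.1} {p : ℝ × ℝ | p.2 = g p.1}) :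
    ∀ x r x' r', F (x, r) = (x', r') →
      ((g x < r → g x' < r') ∧ (r < g x → r' < g x')) := by
  intro x r x' r' hFx
  have hF := fun x r x' r' => (hFdef x r x' r').mp
  have hneg : ∀ x y, D12 H x y < 0 := fun x y => (htwist x y).trans_lt (neg_neg_of_pos hρ)
  have hmono := strictMono_graphMap hF hinv.mapsTo (hH.of_le one_le_two) hper hneg hg hgper
    hinv.injOn
  obtain ⟨⟨x₀, _⟩, rfl : _ = g x₀, hFx₀⟩ := hinv.surjOn (show (x', g x') ∈ _ from rfl)
  have hx' : graphMap F g x₀ = x' := congrArg Prod.fst hFx₀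
  obtain ⟨hr, hr'⟩ := hF _ _ _ _ hFx
  -- with `φ = graphMap F g`: `g x < r ↔ φ x < x' = φ x₀ ↔ x < x₀ ↔ g x' < r'`, and likewise for `>`
  rw [← neg_neg (g x), ← D1_graphMap hF hinv.mapsTo x, (hF _ _ _ _ hFx₀).2, hr, hr',
    neg_lt_neg_iff, neg_lt_neg_iff, (strictAnti_D1 hneg x).lt_iff_gt,
    (strictAnti_D1 hneg x).lt_iff_gt, (strictAnti_D2_fst hH hneg x').lt_iff_gt,
    (strictAnti_D2_fst hH hneg x').lt_iff_gt, ← hx', hmono.lt_iff_lt, hmono.lt_iff_lt]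
  exact ⟨id, id⟩

/-- For a positive twist map `F` generated by `H` with `∂₁₂H ≤ -ρ < 0` and
`|∂₁₂H| ≤ M'`, and a continuous periodic invariant graph `Γ = {(x, g(x))}`, the regions
above and below the graph are invariant. -/
theorem stmt6 (H : ℝ → ℝ → ℝ) (ρ M' : ℝ) (F : ℝ × ℝ → ℝ × ℝ)
    (hH : ContDiff ℝ 2 (Function.uncurry H))
    (hper : ∀ x x', H (x + 1) (x' + 1) = H x x')
    (hρ : 0 < ρ) (htwist : ∀ x x', D12 H x x' ≤ -ρ)
    (hM' : 0 < M') (hMb : ∀ x x', |D12 H x x'| ≤ M')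
    (hFbij : Function.Bijective F)
    (hFdef : ∀ x r x' r', F (x, r) = (x', r') ↔ (r = -D1 H x x' ∧ r' = D2 H x x'))
    (g : ℝ → ℝ) (hg : Continuous g) (hgper : ∀ x, g (x + 1) = g x)
    (hinv : Set.BijOn F {p : ℝ × ℝ | p.2 = g p.1} {p : ℝ × ℝ | p.2 = g p.1}) :
    ∀ x r x' r', F (x, r) = (x', r') →
      ((g x < r → g x' < r') ∧ (r < g x → r' < g x')) :=
  stmt6_general H ρ F hH hper hρ htwist hFdef g hg hgper hinv
end

section
/- Let H, ρ, F be as in the twist map setting. Let g : ℝ → ℝ be continuous with g(x + 1) = g(x), whose graph is invariant under F (F maps the graph bijectively onto itself). Assume: (1) there is τ > 0 such that π₁F(x, r₂) - π₁F(x, r₁) ≥ τ(r₂ - r₁) whenever r₁ ≤ r₂; (2) there is c ∈ (0, 1] such that π₁F(y, g(y)) - π₁F(x, g(x)) ≥ c(y - x) whenever x ≤ y. Let (x_k, r_k)_{0 ≤ k ≤ N} be an orbit of F with r_k < g(x_k) for all k. Then for all 0 ≤ j < k ≤ N, π₁(F^{k-j}(x_j, g(x_j))) - x_k ≥ c^{k-j}·τ·(g(x_j)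 - r_j). -/
open Real

/-- Quantitative twist estimate below an invariant graph: if the orbit
`(x_k, r_k)_{0 ≤ k ≤ N}` stays strictly below the invariant graph of `g`, then
`π₁F^{k-j}(x_j, g(x_j)) - x_k ≥ c^{k-j}·τ·(g(x_j) - r_j)` for `0 ≤ j < k ≤ N`. -/
theorem stmt8 (H : ℝ → ℝ → ℝ) (ρ : ℝ) (F : ℝ × ℝ → ℝ × ℝ)
    (hH : ContDiff ℝ 2 (Function.uncurry H))
    (hper : ∀ x x', H (x + 1) (x' + 1) = H x x')
    (hρ : 0 < ρ) (htwist : ∀ x x', D12 H x x' ≤ -ρ)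
    (hFbij : Function.Bijective F)
    (hFdef : ∀ x r x' r', F (x, r) = (x', r') ↔ (r = -D1 H x x' ∧ r' = D2 H x x'))
    (g : ℝ → ℝ) (hg : Continuous g) (hgper : ∀ x, g (x + 1) = g x)
    (hinv : Set.BijOn F {p : ℝ × ℝ | p.2 = g p.1} {p : ℝ × ℝ | p.2 = g p.1})
    (τ : ℝ) (hτ : 0 < τ)
    (huniftwist : ∀ x r₁ r₂ : ℝ, r₁ ≤ r₂ → τ * (r₂ - r₁) ≤ (F (x, r₂)).1 - (F (x, r₁)).1)
    (c : ℝ) (hc0 : 0 < c) (hc1 : c ≤ 1)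
    (hexp : ∀ x y : ℝ, x ≤ y → c * (y - x) ≤ (F (y, g y)).1 - (F (x, g x)).1)
    (N : ℕ) (x r : ℕ → ℝ)
    (horb : ∀ k, k < N → F (x k, r k) = (x (k + 1), r (k + 1)))
    (hbelow : ∀ k, k ≤ N → r k < g (x k)) :
    ∀ j k, j < k → k ≤ N →
      c ^ (k - j) * τ * (g (x j) - r j) ≤ (F^[k - j] (x j, g (x j))).1 - x k := by
  have hgraph : ∀ p : ℝ × ℝ, p.2 = g p.1 → (F p).2 = g (F p).1 := fun p hp => hinv.mapsTo hp
  have hiter : ∀ n (x0 : ℝ), (F^[n] (x0, g x0)).2 = g (F^[n] (x0, g x0)).1 := by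
    intro n x0
    induction n with
    | zero => simp
    | succ n ih =>
      rw [Function.iterate_succ_apply']
      exact hgraph _ ih
  have main : ∀ d j, 1 ≤ d → j + d ≤ N →
      c ^ d * τ * (g (x j) - r j) ≤ (F^[d] (x j, g (x j))).1 - x (j + d) := by
    intro d
    induction d with
    | zero => intro j h; omega
    | succ d ih =>
      intro j _ hjd
      have hΔ : 0 < g (x j) - r j := sub_pos.2 (hbelow j (by omega))
      rcases Nat.eq_zero_or_pos d with hd | hd
      · subst hd
        have h1 := huniftwist (x j) (r j) (g (x j)) (le_of_lt (hbelow j (by omega)))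
        have h2 : F (x j, r j) = (x (j + 1), r (j + 1)) := horb j (by omega)
        have hx1 : (F (x j, r j)).1 = x (j + 1) := by rw [h2]
        rw [hx1] at h1
        norm_num
        nlinarith [mul_pos hτ hΔ]
      · have ihd := ih j hd (by omega)
        set p := F^[d] (x j, g (x j)) with hp
        have hp2 : p.2 = g p.1 := hiter d (x j)
        have hpow : 0 < c ^ d := pow_pos hc0 d
        have hxk : x (j + d) ≤ p.1 := by nlinarith [mul_pos (mul_pos hpow hτ) hΔ]
        have hexp' := hexp (x (j + d)) p.1 hxk
        have htw := huniftwist (x (j + d)) (r (j + d)) (g (x (j + d)))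
          (le_of_lt (hbelow (j + d) (by omega)))
        have horb' : F (x (j + d), r (j + d)) = (x (j + d + 1), r (j + d + 1)) :=
          horb (j + d) (by omega)
        have hx1 : (F (x (j + d), r (j + d))).1 = x (j + d + 1) := by rw [horb']
        rw [hx1] at htw
        have hFp : F p = F (p.1, g p.1) := by rw [← hp2]
        have hmul := mul_le_mul_of_nonneg_left ihd hc0.le
        rw [Function.iterate_succ_apply', hFp]
        have hjd1 : j + (d + 1) = j + d + 1 := by omega
        rw [hjd1, pow_succ]
        nlinarith [mul_nonneg hτ.le (sub_nonneg.2 (le_of_lt (hbelow (j + d) (by omega : j + d ≤ N))))]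
  intro j k hjk hkN
  have hk : k = j + (k - j) := by omega
  have := main (k - j) j (by omega) (by omega)
  rwa [← hk] at this
end

section
/- Let H : ℝ × ℝ → ℝ be C² with H(x + 1, x' + 1) = H(x, x') for all x, x', and suppose there is ρ > 0 such that ∂₁₂H(x, x') ≤ -ρ for all x, x'. Then H is uniformly superlinear: for every A > 0 there exists B > 0 such that H(x, x') ≥ A·|x' - x| whenever |x' - x| ≥ B. -/
open Real

/-!
Integrating `∂₁₂H ≤ -ρ` in the second variable shows that `t ↦ ∂₁H(s, t) + ρ t` is
antitone, so `∂₁H(s, x')` differs from the diagonal value `∂₁H(s, s)` by at least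
`ρ |x' - s|`, with the sign that pushes `H(·, x')` up away from `x'`. Integrating once more
in the first variable from `x'` to `x` gives
`H(x, x') ≥ H(x', x') - M |x' - x| + ρ/2 (x' - x)²`,
where `M` bounds `|∂₁H|` on the diagonal. By periodicity, `H` and `∂₁H` are bounded on the
diagonal, so the quadratic term eventually dominates any linear function of `|x' - x|`.
-/

section Regularity

variable {H : ℝ → ℝ → ℝ}

lemma hasDerivAt_D1 {x x' : ℝ} (h : DifferentiableAt ℝ (Function.uncurry H) (x, x')) :
    HasDerivAt (fun t => H t x') (D1 H x x') x :=
  (DifferentiableAt.comp (g := Function.uncurry H) x h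
    ((hasDerivAt_id x).prodMk (hasDerivAt_const x x')).differentiableAt).hasDerivAt

lemma hasDerivAt_D2 {x x' : ℝ} (h : DifferentiableAt ℝ (Function.uncurry H) (x, x')) :
    HasDerivAt (fun t => H x t) (D2 H x x') x' :=
  (DifferentiableAt.comp (g := Function.uncurry H) x' h
    ((hasDerivAt_const x' x).prodMk (hasDerivAt_id x')).differentiableAt).hasDerivAt

lemma D1_eq_fderiv_s10 (h : Differentiable ℝ (Function.uncurry H)) :
    Function.uncurry (D1 H) = fun p => fderiv ℝ (Function.uncurry H) p (1, 0) := by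
  funext ⟨x, x'⟩
  have hpath : HasDerivAt (fun t : ℝ => (t, x')) ((1 : ℝ), (0 : ℝ)) x :=
    (hasDerivAt_id x).prodMk (hasDerivAt_const x x')
  have hcomp : HasDerivAt (fun t => H t x') (fderiv ℝ (Function.uncurry H) (x, x') (1, 0)) x :=
    (h (x, x')).hasFDerivAt.comp_hasDerivAt (l := Function.uncurry H) x hpath
  exact (hasDerivAt_D1 (h (x, x'))).unique hcomp

lemma contDiff_D1 {n : WithTop ℕ∞} (hH : ContDiff ℝ (n + 1) (Function.uncurry H)) :
    ContDiff ℝ n (Function.uncurry (D1 H)) := by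
  rw [D1_eq_fderiv_s10 (hH.differentiable (by simp))]
  exact (hH.fderiv_right le_rfl).clm_apply contDiff_const

lemma periodic_D1_diag {c : ℝ} (hper : ∀ x x', H (x + c) (x' + c) = H x x') :
    Function.Periodic (fun s => D1 H s s) c := by
  intro s
  have hshift : (fun t => H t (s + c)) = fun t => H (t - c) s := by
    funext t
    rw [← hper (t - c) s, sub_add_cancel]
  simp only [D1, hshift, deriv_comp_sub_const (f := fun u => H u s), add_sub_cancel_right]

end Regularity

lemma exists_abs_le_of_periodic {f : ℝ → ℝ} {c : ℝ} (hp : Function.Periodic f c) (hc : c ≠ 0)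
    (hf : Continuous f) : ∃ C, ∀ s, |f s| ≤ C := by
  obtain ⟨C, hC⟩ := isBounded_iff_forall_norm_le.1 (hp.isBounded_of_continuous hc hf)
  exact ⟨C, fun s => hC (f s) ⟨s, rfl⟩⟩

lemma exists_mul_le_quadratic {ρ : ℝ} (hρ : 0 < ρ) (A M C : ℝ) :
    ∃ B > 0, ∀ d, B ≤ d → A * d ≤ ρ / 2 * d ^ 2 - M * d - C := by
  refine ⟨max 1 (2 * (A + M + |C|) / ρ), lt_max_of_lt_left one_pos, fun d hd => ?_⟩
  have hd1 : 1 ≤ d := le_of_max_le_left hd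
  have hdρ : 2 * (A + M + |C|) ≤ ρ * d := by
    have := le_of_max_le_right hd
    rwa [div_le_iff₀ hρ, mul_comm d] at this
  nlinarith [le_abs_self C, abs_nonneg C]

section Twist

variable {H : ℝ → ℝ → ℝ} {ρ : ℝ}

lemma antitone_D1_add_mul {x : ℝ} (hD12 : ∀ t, HasDerivAt (fun t => D1 H x t) (D12 H x t) t)
    (htwist : ∀ t, D12 H x t ≤ -ρ) : Antitone fun t => D1 H x t + ρ * t := by
  refine antitone_of_hasDerivAt_nonpos (f' := fun t => D12 H x t + ρ * 1)
    (fun t => (hD12 t).add ((hasDerivAt_id t).const_mul ρ)) fun t => ?_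
  simp only [Pi.zero_apply]
  linarith [htwist t]

lemma diag_sub_add_sq_le {M : ℝ}
    (hD1 : ∀ x x', HasDerivAt (fun t => H t x') (D1 H x x') x)
    (hanti : ∀ s, Antitone fun t => D1 H s t + ρ * t) (hM : ∀ s, |D1 H s s| ≤ M) (x x' : ℝ) :
    H x' x' - M * |x' - x| + ρ / 2 * (x' - x) ^ 2 ≤ H x x' := by
  -- `g' = ∂₁H(s, x') - ρ (s - x')` is at most `∂₁H(s, s) ≤ M` left of `x'` and at least
  -- `∂₁H(s, s) ≥ -M` right of it.
  set g : ℝ → ℝ := fun s => H s x' - ρ / 2 * (s - x') ^ 2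
  have hg : ∀ s, HasDerivAt g (D1 H s x' - ρ * (s - x')) s := fun s => by
    have hsq : HasDerivAt (fun s => (s - x') ^ 2) (2 * (s - x')) s := by
      simpa using ((hasDerivAt_id s).sub_const x').fun_pow 2
    exact ((hD1 s x').fun_sub (hsq.const_mul (ρ / 2))).congr_deriv (by ring)
  have hgd : Differentiable ℝ g := fun s => (hg s).differentiableAt
  rcases le_total x x' with hxx' | hx'x
  · have hslope := (convex_Iic x').image_sub_le_mul_sub_of_deriv_le hgd.continuous.continuousOn
      hgd.differentiableOn (C := M) (fun s hs => ?_) x hxx' x' Set.self_mem_Iic hxx'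
    · simp only [g, sub_self] at hslope
      rw [abs_of_nonneg (sub_nonneg.2 hxx')]
      nlinarith
    · rw [interior_Iic] at hs
      rw [(hg s).deriv]
      linarith [hanti s (hs.le), (abs_le.1 (hM s)).2]
  · have hslope := (convex_Ici x').mul_sub_le_image_sub_of_le_deriv hgd.continuous.continuousOn
      hgd.differentiableOn (C := -M) (fun s hs => ?_) x' Set.self_mem_Ici x hx'x hx'x
    · simp only [g, sub_self] at hslope
      rw [abs_of_nonpos (sub_nonpos.2 hx'x)]
      nlinarith
    · rw [interior_Ici] at hs
      rw [(hg s).deriv]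
      linarith [hanti s (hs.le), (abs_le.1 (hM s)).1]

end Twist

/-- Uniform superlinearity of a periodic generating function with uniform twist:
if `H(x+1, x'+1) = H(x, x')` and `∂₁₂H ≤ -ρ < 0`, then for every `A > 0` there is `B > 0`
with `H(x, x') ≥ A·|x' - x|` whenever `|x' - x| ≥ B`. -/
theorem stmt10 (H : ℝ → ℝ → ℝ) (ρ : ℝ)
    (hH : ContDiff ℝ 2 (Function.uncurry H))
    (hper : ∀ x x', H (x + 1) (x' + 1) = H x x')
    (hρ : 0 < ρ) (htwist : ∀ x x', D12 H x x' ≤ -ρ) :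
    ∀ A : ℝ, 0 < A → ∃ B : ℝ, 0 < B ∧
      ∀ x x' : ℝ, B ≤ |x' - x| → A * |x' - x| ≤ H x x' := by
  intro A _
  have hH1 : ContDiff ℝ 1 (Function.uncurry (D1 H)) := contDiff_D1 hH
  have hD1 x x' := hasDerivAt_D1 (hH.differentiable two_ne_zero (x, x'))
  have hanti s := antitone_D1_add_mul
    (fun t => hasDerivAt_D2 (hH1.differentiable one_ne_zero (s, t))) (htwist s)
  have hdiag : Continuous fun s : ℝ => (s, s) := continuous_id.prodMk continuous_id
  obtain ⟨C, hC⟩ := exists_abs_le_of_periodic (f := fun s => H s s) (fun s => hper s s)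
    one_ne_zero (hH.continuous.comp hdiag)
  obtain ⟨M, hM⟩ := exists_abs_le_of_periodic (periodic_D1_diag hper) one_ne_zero
    (hH1.continuous.comp hdiag)
  obtain ⟨B, hB, hBd⟩ := exists_mul_le_quadratic hρ A M C
  refine ⟨B, hB, fun x x' hx => ?_⟩
  have hquad := diag_sub_add_sq_le hD1 hanti hM x x'
  rw [← sq_abs] at hquad
  linarith [hBd _ hx, (abs_le.1 (hC x')).1]
end

section
/- For all κ₁ ≥ κ₀ > 0 there exists C > 1, depending only on κ₀ and κ₁, such that the following holds. Let γ : ℝ → ℝ² be C² with γ(s + 1) = γ(s) and ‖γ'(s)‖ = 1 for all s, with curvature κ(s) := det(γ'(s), γ''(s)) satisfying κ₀ ≤ κ(s) ≤ κ₁ for all s and ∫₀¹ κ(s) ds = 2π. Then for all s₁, s₂ ∈ ℝ, C⁻¹·dist_𝕋(s₁, s₂) ≤ ‖γ(s₂) - γ(s₁)‖ ≤ dist_𝕋(s₁, s₂). -/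
/-!
Writing the plane as `ℂ`, the unit tangent of the curve is `exp (θ s * I)` for a lift `θ` with
`θ' = κ`. On an arc `[a, b]` that turns by `Φ = θ b - θ a ≤ π`, project the chord onto the mean
direction `exp (m * I)`, `m = (θ a + θ b) / 2`: there `cos (θ - m) ≥ 0`, so
`κ₁ ‖γ b - γ a‖ ≥ ∫ cos (θ - m) κ = 2 sin (Φ / 2)`, and Jordan's inequality together with
`Φ ≥ κ₀ (b - a)` gives a chord bound linear in `b - a`. If `Φ > π`, the complementary arc of the
closed curve turns by `2π - Φ < π` and is the longer one. The upper bound holds because a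
unit-speed curve is `1`-Lipschitz.
-/

open Real

/-- Distance on the circle `ℝ/ℤ`: `dist_𝕋(s₁, s₂) = min_{n ∈ ℤ} |s₂ - s₁ - n|`. -/
noncomputable def distT (s₁ s₂ : ℝ) : ℝ := ⨅ n : ℤ, |s₂ - s₁ - (n : ℝ)|

/-- The (signed) curvature `κ(s) = det(γ'(s), γ''(s))` of a unit-speed plane curve. -/
noncomputable def curv (γ : ℝ → EuclideanSpace ℝ (Fin 2)) (s : ℝ) : ℝ :=
  deriv γ s 0 * deriv (deriv γ) s 1 - deriv γ s 1 * deriv (deriv γ) s 0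

open Set ComplexConjugate

theorem add_period_eq_add_integral {θ κ : ℝ → ℝ} {T : ℝ} (hθ : ∀ t, HasDerivAt θ (κ t) t)
    (hκ : Continuous κ) (hper : Function.Periodic κ T) (t : ℝ) :
    θ (t + T) = θ t + ∫ s in (0:ℝ)..T, κ s := by
  have hshift := hper.intervalIntegral_add_eq t 0
  rw [zero_add] at hshift
  rw [← hshift,
    intervalIntegral.integral_eq_sub_of_hasDerivAt (fun s _ => hθ s) (hκ.intervalIntegrable _ _)]
  ring

theorem Function.Periodic.deriv {𝕜 F : Type*} [NontriviallyNormedField 𝕜] [NormedAddCommGroup F]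
    [NormedSpace 𝕜 F] {f : 𝕜 → F} {T : 𝕜} (h : Function.Periodic f T) :
    Function.Periodic (deriv f) T := fun x => by
  rw [← deriv_comp_add_const, h.funext]

theorem distT_le (s₁ s₂ : ℝ) (n : ℤ) : distT s₁ s₂ ≤ |s₂ - s₁ - n| :=
  ciInf_le ⟨0, Set.forall_mem_range.2 fun _ => abs_nonneg _⟩ n

theorem norm_sub_le_distT {E : Type*} [SeminormedAddCommGroup E] {f : ℝ → E}
    (hf : LipschitzWith 1 f) (hper : Function.Periodic f 1) (s₁ s₂ : ℝ) :
    ‖f s₂ - f s₁‖ ≤ distT s₁ s₂ :=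
  le_ciInf fun n => by
    have hshift : f (s₂ - n) = f s₂ := by simpa using hper.sub_int_mul_eq (x := s₂) n
    simpa [dist_eq_norm, hshift, sub_right_comm] using hf.dist_le_mul (s₂ - n) s₁

open Complex in
theorem exists_hasDerivAt_angle_of_norm_eq_one {v v' : ℝ → ℂ} (hv : ∀ s, HasDerivAt v (v' s) s)
    (hv' : Continuous v') (hnorm : ∀ s, ‖v s‖ = 1) :
    ∃ θ : ℝ → ℝ, (∀ s, HasDerivAt θ (conj (v s) * v' s).im s) ∧
      ∀ s, v s = exp (θ s * I) := by
  set κ : ℝ → ℝ := fun s => (conj (v s) * v' s).im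
  have hvc : Continuous v := continuous_iff_continuousAt.2 fun s => (hv s).continuousAt
  have hκ : Continuous κ := by fun_prop
  have hrot : ∀ s, v' s = v s * (κ s * I) := by
    intro s
    have hre : (conj (v s) * v' s).re = 0 := by
      have h := ((hv s).norm_sq.congr_of_eventuallyEq
        (Filter.Eventually.of_forall fun t => by simp [hnorm t])).unique (hasDerivAt_const s 1)
      simp only [Complex.inner, mul_eq_zero, OfNat.ofNat_ne_zero, false_or] at h
      simpa [mul_comm] using h
    have hκI : conj (v s) * v' s = κ s * I := Complex.ext (by simp [hre, κ]) (by simp [κ])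
    calc v' s = v s * conj (v s) * v' s := by
          rw [mul_conj, normSq_eq_norm_sq, hnorm]; simp
      _ = v s * (κ s * I) := by rw [mul_assoc, hκI]
  obtain ⟨φ, hφ⟩ := (norm_eq_one_iff _).mp (hnorm 0)
  set θ : ℝ → ℝ := fun s => φ + ∫ t in (0:ℝ)..s, κ t
  have hθ : ∀ s, HasDerivAt θ (κ s) s := fun s =>
    (hκ.integral_hasStrictDerivAt 0 s).hasDerivAt.const_add φ
  have hrotated : ∀ s, HasDerivAt (fun t => v t * exp (-(θ t * I))) 0 s := by
    intro s
    refine ((hv s).fun_mul ((hθ s).ofReal_comp.mul_const I).neg.cexp).congr_deriv ?_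
    rw [hrot s]; ring
  refine ⟨θ, hθ, fun s => ?_⟩
  have h := is_const_of_deriv_eq_zero (fun t => (hrotated t).differentiableAt)
    (fun t => (hrotated t).deriv) s 0
  have hθ0 : θ 0 = φ := by simp [θ]
  simp only [hθ0, ← hφ, ← Complex.exp_add, add_neg_cancel, Complex.exp_zero] at h
  calc v s = v s * exp (-(θ s * I)) * exp (θ s * I) := by
        rw [mul_assoc, ← Complex.exp_add, neg_add_cancel, Complex.exp_zero, mul_one]
    _ = exp (θ s * I) := by rw [h, one_mul]

theorem two_mul_sin_half_turning_le_mul_norm_sub {z : ℝ → ℂ} {θ κ : ℝ → ℝ} {K a b : ℝ}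
    (hz : ∀ t, HasDerivAt z (Complex.exp (θ t * Complex.I)) t)
    (hθ : ∀ t, HasDerivAt θ (κ t) t) (hκ : ∀ t, 0 ≤ κ t) (hκK : ∀ t, κ t ≤ K)
    (hab : a ≤ b) (hturn : θ b - θ a ≤ π) :
    2 * sin ((θ b - θ a) / 2) ≤ K * ‖z b - z a‖ := by
  set m := (θ a + θ b) / 2 with hm
  set u := Complex.exp (↑(-m) * Complex.I)
  set p : ℝ → ℝ := fun t => (u * z t).re
  have hp : ∀ t, HasDerivAt p (cos (θ t - m)) t := by
    intro t
    refine (Complex.reCLM.hasFDerivAt.comp_hasDerivAt t ((hz t).const_mul u)).congr_deriv ?_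
    rw [← Complex.exp_add, ← add_mul, ← Complex.ofReal_add, Complex.reCLM_apply,
      Complex.exp_ofReal_mul_I_re]
    ring_nf
  have hcos : ∀ t ∈ Icc a b, 0 ≤ cos (θ t - m) := by
    have hθmono : Monotone θ := monotone_of_hasDerivAt_nonneg hθ hκ
    intro t ht
    have := hθmono ht.1
    have := hθmono ht.2
    rw [hm]
    exact cos_nonneg_of_mem_Icc ⟨by linarith, by linarith⟩
  have hF : MonotoneOn (fun t => K * p t - sin (θ t - m)) (Icc a b) := by
    have hF' : ∀ t, HasDerivAt (fun t => K * p t - sin (θ t - m))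
        (cos (θ t - m) * (K - κ t)) t := fun t =>
      (((hp t).const_mul K).sub ((hθ t).sub_const m).sin).congr_deriv (by ring)
    refine monotoneOn_of_hasDerivWithinAt_nonneg (convex_Icc a b)
      (HasDerivAt.continuousOn fun t _ => hF' t) (fun t _ => (hF' t).hasDerivWithinAt)
      fun t ht => mul_nonneg (hcos t (interior_subset ht)) (sub_nonneg.2 (hκK t))
  have hsin : sin (θ b - m) - sin (θ a - m) = 2 * sin ((θ b - θ a) / 2) := by
    rw [show θ b - m = (θ b - θ a) / 2 by ring, show θ a - m = -((θ b - θ a) / 2) by ring,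
      sin_neg]
    ring
  have hproj : p b - p a ≤ ‖z b - z a‖ := calc
    p b - p a = (u * (z b - z a)).re := by simp only [p, mul_sub, Complex.sub_re]
    _ ≤ ‖u * (z b - z a)‖ := Complex.re_le_norm _
    _ = ‖z b - z a‖ := by rw [norm_mul, Complex.norm_exp_ofReal_mul_I, one_mul]
  have hK : 0 ≤ K := (hκ a).trans (hκK a)
  nlinarith [hF ⟨le_rfl, hab⟩ ⟨hab, le_rfl⟩ hab, mul_le_mul_of_nonneg_left hproj hK]

theorem two_mul_abs_sub_le_pi_mul_norm_sub {z : ℝ → ℂ} {θ κ : ℝ → ℝ} {κ₀ κ₁ : ℝ}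
    (hz : ∀ t, HasDerivAt z (Complex.exp (θ t * Complex.I)) t)
    (hθ : ∀ t, HasDerivAt θ (κ t) t) (h0 : 0 < κ₀) (hκ₀ : ∀ t, κ₀ ≤ κ t)
    (hκ₁ : ∀ t, κ t ≤ κ₁) (hz_per : Function.Periodic z 1)
    (hθ_per : ∀ t, θ (t + 1) = θ t + 2 * π) {a b : ℝ} (hab : |b - a| ≤ 1 / 2) :
    2 * κ₀ * |b - a| ≤ π * κ₁ * ‖z b - z a‖ := by
  wlog hle : a ≤ b generalizing a b
  · have := this (by rwa [abs_sub_comm]) (le_of_not_ge hle)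
    rwa [abs_sub_comm, norm_sub_rev] at this
  rw [abs_of_nonneg (sub_nonneg.2 hle)] at hab ⊢
  have hturn_ge : ∀ x y, x ≤ y → κ₀ * (y - x) ≤ θ y - θ x :=
    mul_sub_le_image_sub_of_le_deriv (fun t => (hθ t).differentiableAt)
      fun t => (hθ t).deriv ▸ hκ₀ t
  have hκ_nonneg : ∀ t, 0 ≤ κ t := fun t => h0.le.trans (hκ₀ t)
  -- Jordan's inequality `2 x / π ≤ sin x` on `[0, π/2]` turns the chord bound into a linear one.
  have hchord : ∀ x y, x ≤ y → θ y - θ x ≤ π → κ₀ * (b - a) ≤ θ y - θ x →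
      2 * κ₀ * (b - a) ≤ π * κ₁ * ‖z y - z x‖ := by
    intro x y hxy hπ hturn
    have hsin := two_mul_sin_half_turning_le_mul_norm_sub hz hθ hκ_nonneg hκ₁ hxy hπ
    have hturn_nonneg := (mul_nonneg h0.le (sub_nonneg.2 hle)).trans hturn
    have hjordan := mul_le_sin (by linarith : 0 ≤ (θ y - θ x) / 2) (by linarith)
    have hlin : θ y - θ x ≤ π * sin ((θ y - θ x) / 2) := by
      have := mul_le_mul_of_nonneg_left hjordan pi_pos.le
      rwa [show π * (2 / π * ((θ y - θ x) / 2)) = θ y - θ x by field_simp] at this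
    linarith [mul_le_mul_of_nonneg_left hsin pi_pos.le]
  rcases le_or_gt (θ b - θ a) π with hπ | hπ
  · exact hchord a b hle hπ (hturn_ge a b hle)
  · -- the complementary arc `[b, a + 1]` turns by `2π - (θ b - θ a) < π`
    have h := hchord b (a + 1) (by linarith) (by rw [hθ_per]; linarith)
      ((mul_le_mul_of_nonneg_left (by linarith) h0.le).trans (hturn_ge b (a + 1) (by linarith)))
    rwa [hz_per, norm_sub_rev] at h

lemma im_conj_mul_orthonormalBasisOneI_repr_symm (x y : EuclideanSpace ℝ (Fin 2)) :
    (conj (Complex.orthonormalBasisOneI.repr.symm x) *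
      Complex.orthonormalBasisOneI.repr.symm y).im = x 0 * y 1 - x 1 * y 0 := by
  simp only [Complex.orthonormalBasisOneI_repr_symm_apply, map_add, map_mul, Complex.conj_ofReal,
    Complex.conj_I, Complex.mul_im, Complex.mul_re, Complex.add_re, Complex.add_im,
    Complex.neg_re, Complex.neg_im, Complex.ofReal_re, Complex.ofReal_im, Complex.I_re,
    Complex.I_im]
  ring

theorem continuous_curv {γ : ℝ → EuclideanSpace ℝ (Fin 2)} (hγ : ContDiff ℝ 2 γ) :
    Continuous (curv γ) := by
  have := hγ.continuous_deriv one_le_two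
  have := hγ.deriv'.continuous_deriv le_rfl
  unfold curv
  fun_prop

theorem periodic_curv {γ : ℝ → EuclideanSpace ℝ (Fin 2)} {T : ℝ} (h : Function.Periodic γ T) :
    Function.Periodic (curv γ) T := fun s => by
  simp only [curv, h.deriv s, h.deriv.deriv s]

theorem exists_tangent_angle {γ : ℝ → EuclideanSpace ℝ (Fin 2)} (hγ : ContDiff ℝ 2 γ)
    (hnorm : ∀ s, ‖deriv γ s‖ = 1) :
    ∃ θ : ℝ → ℝ, (∀ s, HasDerivAt θ (curv γ s) s) ∧
      ∀ s, HasDerivAt (fun t => Complex.orthonormalBasisOneI.repr.symm (γ t))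
        (Complex.exp (θ s * Complex.I)) s := by
  set e := Complex.orthonormalBasisOneI.repr.symm
  have he : ∀ {f : ℝ → EuclideanSpace ℝ (Fin 2)} {f' s}, HasDerivAt f f' s →
      HasDerivAt (fun t => e (f t)) (e f') s := fun hf =>
    e.toContinuousLinearEquiv.hasFDerivAt.comp_hasDerivAt _ hf
  have hγ' : ContDiff ℝ 1 (deriv γ) := hγ.deriv'
  obtain ⟨θ, hθ, hv⟩ := exists_hasDerivAt_angle_of_norm_eq_one
    (fun s => he ((hγ'.differentiable one_ne_zero s).hasDerivAt))
    (e.continuous.comp (hγ'.continuous_deriv le_rfl)) (fun s => by simp [hnorm])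
  refine ⟨θ, fun s => ?_, fun s => ?_⟩
  · have := hθ s
    rwa [im_conj_mul_orthonormalBasisOneI_repr_symm] at this
  · rw [← hv s]
    exact he ((hγ.differentiable two_ne_zero s).hasDerivAt)

/-- Chord–arc estimate: for a unit-speed `1`-periodic `C²` plane curve with curvature
pinched in `[κ₀, κ₁]` and total curvature `2π`, the chord length `‖γ(s₂) - γ(s₁)‖` is
comparable to the circle distance `dist_𝕋(s₁, s₂)`, with constant depending only on
`κ₀, κ₁`. -/
theorem stmt11 (κ₀ κ₁ : ℝ) (h0 : 0 < κ₀) (h01 : κ₀ ≤ κ₁) :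
    ∃ C : ℝ, 1 < C ∧
      ∀ γ : ℝ → EuclideanSpace ℝ (Fin 2),
        ContDiff ℝ 2 γ → (∀ s, γ (s + 1) = γ s) → (∀ s, ‖deriv γ s‖ = 1) →
        (∀ s, κ₀ ≤ curv γ s) → (∀ s, curv γ s ≤ κ₁) →
        (∫ s in (0:ℝ)..1, curv γ s) = 2 * π →
        ∀ s₁ s₂ : ℝ,
          C⁻¹ * distT s₁ s₂ ≤ ‖γ s₂ - γ s₁‖ ∧ ‖γ s₂ - γ s₁‖ ≤ distT s₁ s₂ := by
  have hC : 1 < π * κ₁ / (2 * κ₀) := by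
    rw [one_lt_div (by positivity)]
    nlinarith [pi_gt_three]
  refine ⟨π * κ₁ / (2 * κ₀), hC, fun γ hγ hper hnorm hκ₀ hκ₁ htot s₁ s₂ => ⟨?_, ?_⟩⟩
  · obtain ⟨θ, hθ, hz⟩ := exists_tangent_angle hγ hnorm
    have hθ_per : ∀ t, θ (t + 1) = θ t + 2 * π := fun t => by
      rw [add_period_eq_add_integral hθ (continuous_curv hγ) (periodic_curv hper), htot]
    set n := round (s₂ - s₁)
    have hchord := two_mul_abs_sub_le_pi_mul_norm_sub hz hθ h0 hκ₀ hκ₁ (fun t => by simp only [hper t])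
      hθ_per (a := s₁) (b := s₂ - n) (by rw [sub_right_comm]; exact abs_sub_round _)
    have hshift : γ (s₂ - n) = γ s₂ := by
      simpa using Function.Periodic.sub_int_mul_eq hper (x := s₂) n
    rw [← map_sub, LinearIsometryEquiv.norm_map, sub_right_comm, hshift] at hchord
    calc (π * κ₁ / (2 * κ₀))⁻¹ * distT s₁ s₂ ≤ (π * κ₁ / (2 * κ₀))⁻¹ * |s₂ - s₁ - n| := by
          gcongr
          exact distT_le s₁ s₂ n
      _ ≤ ‖γ s₂ - γ s₁‖ := by
          rw [inv_div, div_mul_eq_mul_div, div_le_iff₀ (mul_pos pi_pos (h0.trans_le h01))]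
          linarith
  · exact norm_sub_le_distT (lipschitzWith_of_nnnorm_deriv_le (hγ.differentiable two_ne_zero)
      fun s => by rw [← NNReal.coe_le_coe]; simp [hnorm]) hper s₁ s₂
end
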